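/- A nonempty subset X of Zar(F) has finite character (every nonzero x ∈ F is a unit in all but finitely many V ∈ X) if and only if X is finite or the set of patch limit points of X equals {F}. -/

import Mathlib

open Set

/-- A subring `V` of a field `F` is a valuation ring of `F` (with quotient field `F`). -/
def IsValSubring (F : Type*) [Field F] (V : Subring F) : Prop :=
  ∀ t : F, t ≠ 0 → t ∈ V ∨ t⁻¹ ∈ V

/-- The Zariski-Riemann space of the field `F`: the set of valuation rings of `F`. -/
def Zar (F : Type*) [Field F] : Type _ := {V : Subring F // IsValSubring F V}

/-- The patch (constructible) topology on `Zar F`, generated by the sets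
`{V : x ∈ V}` and `{V : y ∉ V}` for `x, y ∈ F`. -/
instance Zar.patchTopology (F : Type*) [Field F] : TopologicalSpace (Zar F) :=
  TopologicalSpace.generateFrom
    ({S | ∃ x : F, S = {V : Zar F | x ∈ V.1}} ∪ {S | ∃ y : F, S = {V : Zar F | y ∉ V.1}})

variable {F : Type*} [Field F]

/-- The maximal ideal of a valuation ring of `F`, as a subset of `F`. -/
def mIdeal (V : Zar F) : Set F := {x : F | x ∈ V.1 ∧ (x = 0 ∨ x⁻¹ ∉ V.1)}

/-- `A(X)`: the intersection of the valuation rings in `X`, as a subset of `F`. -/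
def aSet (X : Set (Zar F)) : Set F := ⋂ V ∈ X, ((V : Zar F).1 : Set F)

/-- `A(X)` as a subring of `F`. -/
def ASub (X : Set (Zar F)) : Subring F := ⨅ V ∈ X, (V : Zar F).1

/-- `J(X)`: the intersection of the maximal ideals of the valuation rings in `X`. -/
def jSet (X : Set (Zar F)) : Set F := ⋂ V ∈ X, mIdeal V

/-- The set of limit points of `X` in the patch topology of `Zar F`. -/
def limPts (X : Set (Zar F)) : Set (Zar F) :=
  {V : Zar F | ∀ U : Set (Zar F), IsOpen U → V ∈ U → ∃ W ∈ X, W ≠ V ∧ W ∈ U}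


/-- The field `F` itself, as the trivial valuation ring in `Zar F`. -/
def trivV (F : Type*) [Field F] : Zar F := ⟨⊤, fun _ _ => Or.inl trivial⟩

/-- A set of valuation rings of `F` has finite character if every nonzero element of `F`
is a unit in all but finitely many of its members. -/
def FiniteChar (X : Set (Zar F)) : Prop :=
  ∀ x : F, x ≠ 0 → {V ∈ X | ¬ (x ∈ V.1 ∧ x⁻¹ ∈ V.1)}.Finite

/-! The patch topology is compact Hausdorff: two distinct valuation rings are separated by the
clopen sets `{V : t ∈ V}`, `{V : t ∉ V}`, and an ultrafilter `𝒰` converges to the valuation ring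
`{t : {V : t ∈ V} ∈ 𝒰}`. Since the basic neighbourhoods of `F` are the sets `{V : x₁, …, xₙ ∈ V}`,
finite character of `X` says exactly that the filter of cofinite subsets of `X` converges to `F`.
In a compact Hausdorff space a nontrivial filter converges to a point iff that point is its only
cluster point, and the cluster points of this filter are the limit points of `X`. -/

open Filter Topology

theorem Filter.mem_cofinite_inf_principal {α : Type*} {s t : Set α} :
    s ∈ cofinite ⊓ 𝓟 t ↔ (t \ s).Finite := by
  rw [mem_inf_principal, mem_cofinite]
  simp only [compl_ofPred, Classical.not_imp]
  rfl

theorem accPt_principal_iff_clusterPt_cofinite_inf {α : Type*} [TopologicalSpace α] [T1Space α]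
    {x : α} {C : Set α} : AccPt x (𝓟 C) ↔ ClusterPt x (cofinite ⊓ 𝓟 C) := by
  have : 𝓝[≠] x = 𝓝 x ⊓ cofinite :=
    le_antisymm (le_inf nhdsWithin_le_nhds (nhdsNE_le_cofinite x))
      (inf_le_inf_left _ (le_principal_iff.mpr (finite_singleton x).compl_mem_cofinite))
  rw [AccPt, ClusterPt, this, inf_assoc]

theorem le_nhds_iff_setOf_clusterPt_eq {α : Type*} [TopologicalSpace α] [CompactSpace α]
    [T2Space α] {l : Filter α} [l.NeBot] {y : α} : l ≤ 𝓝 y ↔ {x | ClusterPt x l} = {y} := by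
  constructor
  · intro h
    ext x
    refine ⟨fun hx => eq_of_nhds_neBot (hx.neBot.mono (inf_le_inf_left _ h)), fun hx => ?_⟩
    rw [mem_singleton_iff.mp hx]
    exact ClusterPt.of_le_nhds h
  · intro h
    exact le_nhds_of_unique_clusterPt fun x hx => (Set.ext_iff.mp h x).mp hx


namespace Zar

theorem isOpen_setOf_mem (x : F) : IsOpen {V : Zar F | x ∈ V.1} :=
  TopologicalSpace.GenerateOpen.basic _ (Or.inl ⟨x, rfl⟩)

theorem isOpen_setOf_notMem (y : F) : IsOpen {V : Zar F | y ∉ V.1} :=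
  TopologicalSpace.GenerateOpen.basic _ (Or.inr ⟨y, rfl⟩)

instance : T2Space (Zar F) := by
  refine ⟨fun V W hVW => ?_⟩
  obtain ⟨t, ht⟩ : ∃ t, ¬ (t ∈ V.1 ↔ t ∈ W.1) := by
    by_contra! h
    exact hVW (Subtype.ext (SetLike.ext h))
  by_cases hV : t ∈ V.1
  · exact ⟨_, _, isOpen_setOf_mem t, isOpen_setOf_notMem t, hV, fun hW => ht (iff_of_true hV hW),
      disjoint_left.mpr fun _ h h' => h' h⟩
  · exact ⟨_, _, isOpen_setOf_notMem t, isOpen_setOf_mem t, hV,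
      not_not.mp fun hW => ht (iff_of_false hV hW), disjoint_left.mpr fun _ h h' => h h'⟩

def ultrafilterLim (𝒰 : Ultrafilter (Zar F)) : Zar F where
  val :=
    { carrier := {t | {V : Zar F | t ∈ V.1} ∈ 𝒰}
      one_mem' := univ_mem' fun V => one_mem V.1
      zero_mem' := univ_mem' fun V => zero_mem V.1
      add_mem' := fun ha hb => mem_of_superset (inter_mem ha hb) fun V (hV : _ ∈ V.1 ∧ _ ∈ V.1) =>
        add_mem hV.1 hV.2
      mul_mem' := fun ha hb => mem_of_superset (inter_mem ha hb) fun V (hV : _ ∈ V.1 ∧ _ ∈ V.1) =>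
        mul_mem hV.1 hV.2
      neg_mem' := fun ha => mem_of_superset ha fun V (hV : _ ∈ V.1) => neg_mem hV }
  property t ht := Ultrafilter.union_mem_iff.mp (univ_mem' fun V => V.2 t ht)

theorem mem_ultrafilterLim {𝒰 : Ultrafilter (Zar F)} {t : F} :
    t ∈ (ultrafilterLim 𝒰).1 ↔ {V : Zar F | t ∈ V.1} ∈ 𝒰 :=
  Iff.rfl

theorem le_nhds_ultrafilterLim (𝒰 : Ultrafilter (Zar F)) : ↑𝒰 ≤ 𝓝 (ultrafilterLim 𝒰) := by
  rw [TopologicalSpace.nhds_generateFrom]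
  refine le_iInf₂ ?_
  rintro s ⟨hs, ⟨x, rfl⟩ | ⟨y, rfl⟩⟩
  · exact le_principal_iff.mpr (mem_ultrafilterLim.mp hs)
  · exact le_principal_iff.mpr (Ultrafilter.compl_mem_iff_notMem.mpr (mt mem_ultrafilterLim.mpr hs))

instance : CompactSpace (Zar F) :=
  ⟨isCompact_iff_ultrafilter_le_nhds.mpr fun 𝒰 _ => ⟨_, trivial, le_nhds_ultrafilterLim 𝒰⟩⟩

theorem mem_limPts_iff_accPt {X : Set (Zar F)} {V : Zar F} : V ∈ limPts X ↔ AccPt V (𝓟 X) := by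
  rw [accPt_iff_nhds]
  constructor
  · intro h U hU
    obtain ⟨t, htU, ht, hVt⟩ := mem_nhds_iff.mp hU
    obtain ⟨W, hWX, hWV, hWt⟩ := h t ht hVt
    exact ⟨W, ⟨htU hWt, hWX⟩, hWV⟩
  · intro h U hU hVU
    obtain ⟨W, ⟨hWU, hWX⟩, hWV⟩ := h U (hU.mem_nhds hVU)
    exact ⟨W, hWX, hWV, hWU⟩

theorem finiteChar_iff_le_nhds_trivV {X : Set (Zar F)} :
    FiniteChar X ↔ cofinite ⊓ 𝓟 X ≤ 𝓝 (trivV F) := by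
  constructor
  · intro hX
    rw [TopologicalSpace.nhds_generateFrom]
    refine le_iInf₂ ?_
    rintro s ⟨hs, ⟨x, rfl⟩ | ⟨y, rfl⟩⟩
    · rw [le_principal_iff, mem_cofinite_inf_principal]
      rcases eq_or_ne x 0 with rfl | hx
      · exact finite_empty.subset fun V hV => hV.2 (zero_mem V.1)
      · exact (hX x hx).subset fun V hV => ⟨hV.1, fun hu => hV.2 hu.1⟩
    · exact absurd (Subring.mem_top y) hs
  · intro h x _
    have key (z : F) : (X \ {V | z ∈ V.1}).Finite :=
      mem_cofinite_inf_principal.mp (h ((isOpen_setOf_mem z).mem_nhds (Subring.mem_top z)))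
    refine ((key x).union (key x⁻¹)).subset ?_
    rintro V ⟨hVX, hV⟩
    by_cases hxV : x ∈ V.1
    · exact Or.inr ⟨hVX, fun hx' => hV ⟨hxV, hx'⟩⟩
    · exact Or.inl ⟨hVX, hxV⟩

end Zar

open Zar in
theorem stmt6_general (X : Set (Zar F)) :
    FiniteChar X ↔ (X.Finite ∨ limPts X = {trivV F}) := by
  rw [finiteChar_iff_le_nhds_trivV]
  rcases X.finite_or_infinite with hfin | hinf
  · have : cofinite ⊓ 𝓟 X = ⊥ :=
      not_neBot.mp (mt cofinite_inf_principal_neBot_iff.mp (not_infinite.mpr hfin))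
    exact iff_of_true (this ▸ bot_le) (Or.inl hfin)
  · have := hinf.cofinite_inf_principal_neBot
    have hlim : limPts X = {V | ClusterPt V (cofinite ⊓ 𝓟 X)} :=
      Set.ext fun V => mem_limPts_iff_accPt.trans accPt_principal_iff_clusterPt_cofinite_inf
    rw [or_iff_right hinf, hlim, le_nhds_iff_setOf_clusterPt_eq]

theorem stmt6 (X : Set (Zar F)) (hX : X.Nonempty) :
    FiniteChar X ↔ (X.Finite ∨ limPts X = {trivV F}) :=
  stmt6_general X
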